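/- arXiv:2301.06384 — 2 statements merged into one kernel-verified Lean document; each statement's English description precedes it below -/
import Mathlib

section
/- Let L be a symmetric n×n matrix, E an n×N matrix, and suppose an n×mN matrix Q with Q^T Q = I and an mN×mN symmetric matrix H satisfy L^j E = Q H^j F for all j ∈ {0,...,m−1}, where F is an mN×N matrix with ‖F‖_F = √N and ‖E‖_F = √N. If φ = p + r where p is a polynomial of degree m−1, then ‖φ(L)E − Q φ(H) F‖_F ≤ √N (‖r(L)‖₂ + ‖r(H)‖₂). -/
/-!
Split `φ(L)E − Qφ(H)F = (p(L)E − Q p(H)F) + (r(L)E − Q r(H)F)`. Since `deg p < m`, the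
polynomial part is a combination of the relations `Lʲ E = Q Hʲ F` and vanishes. For the rest,
`‖XY‖_F ≤ ‖X‖₂ ‖Y‖_F` (apply `X` column by column) and `‖Q‖₂ ≤ 1` because `QᵀQ = I`.
-/

noncomputable section
open Matrix Polynomial Set Filter

/-- The matrix function `φ(A)` of a symmetric matrix, defined via the spectral
decomposition: apply `φ` to each eigenvalue. -/
noncomputable def matFun {n : ℕ} {A : Matrix (Fin n) (Fin n) ℝ} (hA : A.IsHermitian)
    (φ : ℝ → ℝ) : Matrix (Fin n) (Fin n) ℝ :=
  (hA.eigenvectorUnitary : Matrix (Fin n) (Fin n) ℝ) *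
    Matrix.diagonal (fun i => φ (hA.eigenvalues i)) *
    star (hA.eigenvectorUnitary : Matrix (Fin n) (Fin n) ℝ)

/-- Spectral (ℓ²-operator) norm of a rectangular real matrix. -/
noncomputable def specNorm {a b : ℕ} (A : Matrix (Fin a) (Fin b) ℝ) : ℝ :=
  ‖LinearMap.toContinuousLinearMap (Matrix.toEuclideanLin A)‖

/-- Frobenius norm of a rectangular real matrix. -/
noncomputable def frobNorm {a b : ℕ} (A : Matrix (Fin a) (Fin b) ℝ) : ℝ :=
  Real.sqrt (∑ i, ∑ j, (A i j) ^ 2)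

/-- Euclidean norm of a vector. -/
noncomputable def euclNorm {a : ℕ} (v : Fin a → ℝ) : ℝ :=
  Real.sqrt (∑ i, (v i) ^ 2)

/-- The `n × N` block `E_W = [e_{w_1}, …, e_{w_N}]` of canonical unit vectors. -/
noncomputable def unitBlock {n N : ℕ} (w : Fin N → Fin n) : Matrix (Fin n) (Fin N) ℝ :=
  fun i j => if w j = i then 1 else 0

section PolynomialRelation

variable {R : Type*} [CommRing R] {ι κ ν : Type*} [Fintype ι] [DecidableEq ι]
  [Fintype κ] [DecidableEq κ]

lemma aeval_mul_eq_of_pow_mul_eq {m : ℕ} {L : Matrix ι ι R} {E : Matrix ι ν R}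
    {Q : Matrix ι κ R} {H : Matrix κ κ R} {F : Matrix κ ν R}
    (hrel : ∀ j < m, L ^ j * E = Q * H ^ j * F) {p : R[X]} (hp : p.natDegree < m) :
    aeval L p * E = Q * aeval H p * F := by
  simp only [aeval_eq_sum_range' hp, Matrix.sum_mul, Matrix.mul_sum, Matrix.smul_mul,
    Matrix.mul_smul]
  refine Finset.sum_congr rfl fun j hj => ?_
  rw [hrel j (Finset.mem_range.mp hj)]

end PolynomialRelation

section MatFun

variable {n : ℕ} {A : Matrix (Fin n) (Fin n) ℝ}

lemma matFun_eq_cfc (hA : A.IsHermitian) (f : ℝ → ℝ) : matFun hA f = cfc f A := by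
  rw [hA.cfc_eq, IsHermitian.cfc, Unitary.conjStarAlgAut_apply]
  rfl

lemma matFun_polynomial_add (hA : A.IsHermitian) (p : ℝ[X]) (r : ℝ → ℝ) :
    matFun hA (fun x => p.eval x + r x) = aeval A p + matFun hA r := by
  have hcont : ∀ f : ℝ → ℝ, ContinuousOn f (spectrum ℝ A) :=
    fun f => A.finite_real_spectrum.continuousOn f
  rw [matFun_eq_cfc, matFun_eq_cfc, cfc_add (a := A) (fun x => p.eval x) r (hcont _) (hcont _),
    cfc_polynomial p A hA.isSelfAdjoint]

end MatFun

section SpectralNorm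

open scoped Matrix.Norms.L2Operator

variable {a b : ℕ}

lemma specNorm_eq_norm (A : Matrix (Fin a) (Fin b) ℝ) : specNorm A = ‖A‖ := rfl

lemma specNorm_nonneg (A : Matrix (Fin a) (Fin b) ℝ) : 0 ≤ specNorm A := norm_nonneg _

lemma norm_mulVec_le_specNorm_mul (A : Matrix (Fin a) (Fin b) ℝ)
    (v : EuclideanSpace ℝ (Fin b)) :
    ‖WithLp.toLp 2 (A *ᵥ v)‖ ≤ specNorm A * ‖v‖ :=
  A.l2_opNorm_mulVec v

lemma specNorm_le_one_of_transpose_mul_self_eq_one {Q : Matrix (Fin a) (Fin b) ℝ}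
    (hQ : Qᵀ * Q = 1) : specNorm Q ≤ 1 := by
  have hsq : specNorm Q * specNorm Q ≤ 1 := by
    rw [specNorm_eq_norm, ← l2_opNorm_conjTranspose_mul_self,
      conjTranspose_eq_transpose_of_trivial, hQ, cstar_norm_def, map_one]
    exact ContinuousLinearMap.norm_id_le
  nlinarith [specNorm_nonneg Q]

end SpectralNorm

section FrobeniusNorm

variable {a b c : ℕ}

lemma frobNorm_nonneg (A : Matrix (Fin a) (Fin b) ℝ) : 0 ≤ frobNorm A := Real.sqrt_nonneg _

lemma frobNorm_sq_eq_sum_norm_sq_col (A : Matrix (Fin a) (Fin b) ℝ) :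
    frobNorm A ^ 2 = ∑ j, ‖WithLp.toLp 2 (Aᵀ j)‖ ^ 2 := by
  rw [frobNorm, Real.sq_sqrt (by positivity), Finset.sum_comm]
  simp [EuclideanSpace.norm_sq_eq]

open scoped Matrix.Norms.Frobenius in
lemma frobNorm_eq_norm (A : Matrix (Fin a) (Fin b) ℝ) : frobNorm A = ‖A‖ := by
  simp [frobNorm, frobenius_norm_def, Real.sqrt_eq_rpow]

lemma frobNorm_sub_le (A B : Matrix (Fin a) (Fin b) ℝ) :
    frobNorm (A - B) ≤ frobNorm A + frobNorm B := by
  open scoped Matrix.Norms.Frobenius in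
  simpa only [frobNorm_eq_norm] using norm_sub_le A B

lemma frobNorm_mul_le (A : Matrix (Fin a) (Fin b) ℝ) (B : Matrix (Fin b) (Fin c) ℝ) :
    frobNorm (A * B) ≤ specNorm A * frobNorm B := by
  have hcol : ∀ j, (A * B)ᵀ j = A *ᵥ Bᵀ j := fun j => by
    ext i; simp [mul_apply, mulVec, dotProduct]
  refine le_of_sq_le_sq ?_ (mul_nonneg (specNorm_nonneg A) (frobNorm_nonneg B))
  calc frobNorm (A * B) ^ 2 = ∑ j, ‖WithLp.toLp 2 (A *ᵥ Bᵀ j)‖ ^ 2 := by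
        simp only [frobNorm_sq_eq_sum_norm_sq_col, hcol]
    _ ≤ ∑ j, (specNorm A * ‖WithLp.toLp 2 (Bᵀ j)‖) ^ 2 := by
        gcongr with j
        exact norm_mulVec_le_specNorm_mul A _
    _ = (specNorm A * frobNorm B) ^ 2 := by
        rw [mul_pow, frobNorm_sq_eq_sum_norm_sq_col, Finset.mul_sum]
        simp only [mul_pow]

lemma frobNorm_mul_le_of_transpose_mul_self_eq_one {Q : Matrix (Fin a) (Fin b) ℝ}
    (hQ : Qᵀ * Q = 1) (B : Matrix (Fin b) (Fin c) ℝ) : frobNorm (Q * B) ≤ frobNorm B :=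
  (frobNorm_mul_le Q B).trans <|
    mul_le_of_le_one_left (frobNorm_nonneg B) (specNorm_le_one_of_transpose_mul_self_eq_one hQ)

end FrobeniusNorm

/-- block Lanczos error lemma: if `L` is symmetric, `QᵀQ = I`, `H` is
symmetric, `Lʲ E = Q Hʲ F` for `j = 0, …, m−1`, `‖E‖_F = ‖F‖_F = √N`, and `φ = p + r` with
`p` a polynomial of degree ≤ `m−1`, then
`‖φ(L)E − Q φ(H) F‖_F ≤ √N (‖r(L)‖₂ + ‖r(H)‖₂)`. -/
theorem stmt5 {n N m M : ℕ} (hm : 1 ≤ m)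
    (L : Matrix (Fin n) (Fin n) ℝ) (hL : L.IsHermitian)
    (E : Matrix (Fin n) (Fin N) ℝ)
    (Q : Matrix (Fin n) (Fin M) ℝ) (hQ : Qᵀ * Q = 1)
    (H : Matrix (Fin M) (Fin M) ℝ) (hH : H.IsHermitian)
    (F : Matrix (Fin M) (Fin N) ℝ)
    (hE : frobNorm E = Real.sqrt N) (hF : frobNorm F = Real.sqrt N)
    (hrel : ∀ j < m, L ^ j * E = Q * H ^ j * F)
    (φ r : ℝ → ℝ) (p : Polynomial ℝ) (hp : p.natDegree ≤ m - 1)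
    (hsplit : ∀ x : ℝ, φ x = p.eval x + r x) :
    frobNorm (matFun hL φ * E - Q * matFun hH φ * F) ≤
      Real.sqrt N * (specNorm (matFun hL r) + specNorm (matFun hH r)) := by
  obtain rfl : φ = fun x => p.eval x + r x := funext hsplit
  have hpoly := aeval_mul_eq_of_pow_mul_eq hrel (p := p) (by omega)
  calc frobNorm (matFun hL _ * E - Q * matFun hH _ * F)
      = frobNorm (matFun hL r * E - Q * (matFun hH r * F)) := by
        rw [matFun_polynomial_add, matFun_polynomial_add, Matrix.add_mul, Matrix.mul_add,
          Matrix.add_mul, hpoly, Matrix.mul_assoc Q (matFun hH r)]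
        abel_nf
    _ ≤ frobNorm (matFun hL r * E) + frobNorm (matFun hH r * F) :=
        (frobNorm_sub_le _ _).trans <|
          add_le_add le_rfl (frobNorm_mul_le_of_transpose_mul_self_eq_one hQ _)
    _ ≤ specNorm (matFun hL r) * frobNorm E + specNorm (matFun hH r) * frobNorm F :=
        add_le_add (frobNorm_mul_le _ _) (frobNorm_mul_le _ _)
    _ = Real.sqrt N * (specNorm (matFun hL r) + specNorm (matFun hH r)) := by
        rw [hE, hF]; ring
end
end

section
/- Let φ be continuous on [0,Λ], L symmetric with spectrum in [0,Λ], E_W an n×N block of distinct unit vectors, γ ≥ 0, and φ_min = min φ > 0. Suppose P_m is a sequence of symmetric matrices with ‖φ(L)E_W − P_m E_W‖₂ → 0 and ‖E_W^T φ(L) E_W − E_W^T P_m E_W‖₂ → 0 as m → ∞. Then the approximate predictors y_m = P_m E_W (E_W^T P_m E_W + γN I_N)^{-1} y (defined for all m large enough that the inverse exists) converge to y* = φ(L)E_W (E_W^T φ(L)E_W + γN I_N)^{-1} y in Euclidean norm. -/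
noncomputable section
open Matrix Polynomial Set Filter

/-! The Gram matrix `E_Wᵀ φ(L) E_W + γN I` is positive definite, since `φ(L)` is (its eigenvalues
are values of `φ ≥ φ_min > 0`) and `E_W` is injective; so its determinant is nonzero and matrix
inversion is continuous there. Spectral-norm convergence gives convergence of `P_m E_W` and of
`E_Wᵀ P_m E_W`, and the predictor depends continuously on both. -/

open scoped Topology

lemma matFun_posDef {n : ℕ} {A : Matrix (Fin n) (Fin n) ℝ} (hA : A.IsHermitian) {φ : ℝ → ℝ}
    (hφ : ∀ i, 0 < φ (hA.eigenvalues i)) : (matFun hA φ).PosDef :=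
  (Matrix.IsUnit.posDef_star_right_conjugate_iff Unitary.isUnit_coe).2
    (PosDef.diagonal hφ)

lemma unitBlock_mulVec_injective {n N : ℕ} {w : Fin N → Fin n} (hw : Function.Injective w) :
    Function.Injective (unitBlock w).mulVec := by
  intro x y h
  funext j
  simpa [Matrix.mulVec, dotProduct, unitBlock, hw.eq_iff] using congrFun h (w j)

lemma Matrix.PosDef.transpose_mul_mul_add_smul_one {k l : Type*} [Fintype k] [Fintype l]
    [DecidableEq l] {K : Matrix k k ℝ} (hK : K.PosDef) {E : Matrix k l ℝ}
    (hE : Function.Injective E.mulVec) {c : ℝ} (hc : 0 ≤ c) :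
    (Eᵀ * K * E + c • (1 : Matrix l l ℝ)).PosDef :=
  (hK.conjTranspose_mul_mul_same hE).add_posSemidef (PosSemidef.one.smul hc)

-- `specNorm` is definitionally the norm of the `L2Operator` instance, whose topology is the
-- usual (entrywise) one on matrices.
open scoped Matrix.Norms.L2Operator in
lemma tendsto_of_specNorm_sub_tendsto_zero {ι : Type*} {l : Filter ι} {a b : ℕ}
    {F : ι → Matrix (Fin a) (Fin b) ℝ} {G : Matrix (Fin a) (Fin b) ℝ}
    (h : Tendsto (fun i => specNorm (G - F i)) l (𝓝 0)) : Tendsto F l (𝓝 G) := by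
  rw [tendsto_iff_norm_sub_tendsto_zero]
  simp_rw [norm_sub_rev]
  exact h

lemma Filter.Tendsto.mul_inv_mulVec {ι k l : Type*} [Fintype k] [Fintype l] [DecidableEq l]
    {f : Filter ι} {A : ι → Matrix k l ℝ} {A₀ : Matrix k l ℝ} {B : ι → Matrix l l ℝ}
    {B₀ : Matrix l l ℝ} (hA : Tendsto A f (𝓝 A₀)) (hB : Tendsto B f (𝓝 B₀)) (hB₀ : B₀.det ≠ 0)
    (y : l → ℝ) : Tendsto (fun i => (A i * (B i)⁻¹) *ᵥ y) f (𝓝 ((A₀ * B₀⁻¹) *ᵥ y)) := by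
  have hinv : Tendsto (fun i => (B i)⁻¹) f (𝓝 B₀⁻¹) :=
    (continuousAt_matrix_inv B₀ (by rw [Ring.inverse_eq_inv']; exact continuousAt_inv₀ hB₀)
      ).tendsto.comp hB
  have hcont : Continuous fun p : Matrix k l ℝ × Matrix l l ℝ => (p.1 * p.2) *ᵥ y :=
    (continuous_fst.matrix_mul continuous_snd).matrix_mulVec continuous_const
  have h := (hcont.tendsto (A₀, B₀⁻¹)).comp (hA.prodMk_nhds hinv)
  exact h

theorem stmt16_general {n N : ℕ} (Λ : ℝ) (L : Matrix (Fin n) (Fin n) ℝ) (hL : L.IsHermitian)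
    (hev : ∀ i, hL.eigenvalues i ∈ Set.Icc (0 : ℝ) Λ)
    (φ : ℝ → ℝ)
    (φmin : ℝ) (hφmin : 0 < φmin) (hφ : ∀ lam ∈ Set.Icc (0 : ℝ) Λ, φmin ≤ φ lam)
    (w : Fin N → Fin n) (hw : Function.Injective w)
    (γ : ℝ) (hγ : 0 ≤ γ) (y : Fin N → ℝ)
    (P : ℕ → Matrix (Fin n) (Fin n) ℝ)
    (hconv1 : Filter.Tendsto
      (fun m => specNorm (matFun hL φ * unitBlock w - P m * unitBlock w))
      Filter.atTop (nhds 0))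
    (hconv2 : Filter.Tendsto
      (fun m => specNorm ((unitBlock w)ᵀ * matFun hL φ * unitBlock w -
        (unitBlock w)ᵀ * P m * unitBlock w))
      Filter.atTop (nhds 0)) :
    Filter.Tendsto
      (fun m => (P m * unitBlock w *
        ((unitBlock w)ᵀ * P m * unitBlock w + (γ * N) • (1 : Matrix (Fin N) (Fin N) ℝ))⁻¹) *ᵥ y)
      Filter.atTop
      (nhds ((matFun hL φ * unitBlock w *
        ((unitBlock w)ᵀ * matFun hL φ * unitBlock w +
          (γ * N) • (1 : Matrix (Fin N) (Fin N) ℝ))⁻¹) *ᵥ y)) := by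
  have hφL : (matFun hL φ).PosDef :=
    matFun_posDef hL fun i => hφmin.trans_le (hφ _ (hev i))
  have hgram := hφL.transpose_mul_mul_add_smul_one (unitBlock_mulVec_injective hw)
    (mul_nonneg hγ N.cast_nonneg)
  exact (tendsto_of_specNorm_sub_tendsto_zero hconv1).mul_inv_mulVec
    ((tendsto_of_specNorm_sub_tendsto_zero hconv2).add_const _) hgram.det_pos.ne' y

/-- if symmetric approximations `P_m` satisfy `‖φ(L)E_W − P_m E_W‖₂ → 0` and
`‖E_Wᵀ φ(L) E_W − E_Wᵀ P_m E_W‖₂ → 0`, then the approximate RLS predictors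
`y_m = P_m E_W (E_Wᵀ P_m E_W + γN I_N)⁻¹ y` converge to the exact predictor
`y* = φ(L)E_W (E_Wᵀ φ(L)E_W + γN I_N)⁻¹ y`. -/
theorem stmt16 {n N : ℕ} (Λ : ℝ) (L : Matrix (Fin n) (Fin n) ℝ) (hL : L.IsHermitian)
    (hev : ∀ i, hL.eigenvalues i ∈ Set.Icc (0 : ℝ) Λ)
    (φ : ℝ → ℝ) (hφc : ContinuousOn φ (Set.Icc 0 Λ))
    (φmin : ℝ) (hφmin : 0 < φmin) (hφ : ∀ lam ∈ Set.Icc (0 : ℝ) Λ, φmin ≤ φ lam)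
    (w : Fin N → Fin n) (hw : Function.Injective w)
    (γ : ℝ) (hγ : 0 ≤ γ) (y : Fin N → ℝ)
    (P : ℕ → Matrix (Fin n) (Fin n) ℝ) (hPsym : ∀ m, (P m).IsHermitian)
    (hconv1 : Filter.Tendsto
      (fun m => specNorm (matFun hL φ * unitBlock w - P m * unitBlock w))
      Filter.atTop (nhds 0))
    (hconv2 : Filter.Tendsto
      (fun m => specNorm ((unitBlock w)ᵀ * matFun hL φ * unitBlock w -
        (unitBlock w)ᵀ * P m * unitBlock w))
      Filter.atTop (nhds 0)) :
    Filter.Tendsto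
      (fun m => (P m * unitBlock w *
        ((unitBlock w)ᵀ * P m * unitBlock w + (γ * N) • (1 : Matrix (Fin N) (Fin N) ℝ))⁻¹) *ᵥ y)
      Filter.atTop
      (nhds ((matFun hL φ * unitBlock w *
        ((unitBlock w)ᵀ * matFun hL φ * unitBlock w +
          (γ * N) • (1 : Matrix (Fin N) (Fin N) ℝ))⁻¹) *ᵥ y)) :=
  stmt16_general Λ L hL hev φ φmin hφmin hφ w hw γ hγ y P hconv1 hconv2
end
end
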